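/- Sklar's theorem in the bivariate absolutely continuous case: if (X,Y) has joint density f and continuous strictly increasing marginals F_X, F_Y with densities f_X, f_Y, then there exists a copula density c on [0,1]^2 with uniform marginals such that f(x,y) = f_X(x) f_Y(y) c(F_X(x), F_Y(y)) for almost every (x,y). -/

import Mathlib

/-!
Take `c(u, v) = f(Q_X u, Q_Y v) / (f_X(Q_X u) f_Y(Q_Y v))` for left inverses `Q_X, Q_Y` of
`F_X, F_Y`; the factorisation of `f` then holds wherever `f_X, f_Y > 0`. The marginals of `c`
are uniform by the probability integral transform: `F_X` maps the law `f_X(x) dx` to the uniform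
distribution on `[0, 1]`, so for `u = F_X x` with `f_X(x) > 0`
`∫₀¹ c(u, v) dv = ∫ f_Y(y) c(u, F_Y y) dy = ∫ f(x, y) dy / f_X(x) = 1`,
which holds for almost every `x`, hence for almost every `u`.
-/

open MeasureTheory Set Function ProbabilityTheory

namespace MeasureTheory

variable {α β : Type*} [MeasurableSpace α] [MeasurableSpace β] {μ : Measure α} {ν : Measure β}

theorem isProbabilityMeasure_withDensity_integral [SFinite μ] [SFinite ν] {f : α × β → ℝ}
    (hf_nonneg : ∀ p, 0 ≤ f p) (hf : Integrable f (μ.prod ν)) (hf_one : ∫ p, f p ∂μ.prod ν = 1) :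
    IsProbabilityMeasure (μ.withDensity fun x => ENNReal.ofReal (∫ y, f (x, y) ∂ν)) := by
  constructor
  rw [withDensity_apply _ MeasurableSet.univ, Measure.restrict_univ,
    ← ofReal_integral_eq_lintegral_ofReal hf.integral_prod_left
      (ae_of_all _ fun x => integral_nonneg fun y => hf_nonneg _),
    ← integral_prod _ hf, hf_one, ENNReal.ofReal_one]

theorem integrable_prod_of_ae_lintegral_eq_one [IsFiniteMeasure μ] [SFinite ν] {c : α × β → ℝ}
    (hc : Measurable c) (hc_nonneg : ∀ p, 0 ≤ c p)
    (h : ∀ᵐ x ∂μ, ∫⁻ y, ENNReal.ofReal (c (x, y)) ∂ν = 1) : Integrable c (μ.prod ν) := by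
  refine ⟨hc.aestronglyMeasurable, ?_⟩
  rw [hasFiniteIntegral_iff_ofReal (ae_of_all _ hc_nonneg),
    lintegral_prod _ hc.ennreal_ofReal.aemeasurable, lintegral_congr_ae h]
  simp [measure_lt_top]

theorem integral_eq_one_of_lintegral_ofReal_eq_one {g : α → ℝ} (hg_nonneg : 0 ≤ᵐ[μ] g)
    (hg : AEStronglyMeasurable g μ) (h : ∫⁻ x, ENNReal.ofReal (g x) ∂μ = 1) : ∫ x, g x ∂μ = 1 := by
  rw [integral_eq_lintegral_of_nonneg_ae hg_nonneg hg, h, ENNReal.toReal_one]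

end MeasureTheory

namespace ProbabilityTheory

variable {μ : Measure ℝ}

theorem cdf_mem_Ioo_of_strictMono (hmono : StrictMono (cdf μ)) (x : ℝ) :
    cdf μ x ∈ Ioo (0 : ℝ) 1 :=
  ⟨(cdf_nonneg μ (x - 1)).trans_lt (hmono (sub_one_lt x)),
    (hmono (lt_add_one x)).trans_le (cdf_le_one μ _)⟩

theorem Ioo_subset_range_cdf (hcont : Continuous (cdf μ)) : Ioo (0 : ℝ) 1 ⊆ range (cdf μ) :=
  fun _ hu => mem_range_of_exists_le_of_exists_ge hcont
    ((tendsto_cdf_atBot μ).eventually_le_const hu.1).exists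
    ((tendsto_cdf_atTop μ).eventually_const_le hu.2).exists

theorem map_cdf_eq_restrict_Icc [IsProbabilityMeasure μ] (hcont : Continuous (cdf μ))
    (hmono : StrictMono (cdf μ)) : μ.map (cdf μ) = volume.restrict (Icc 0 1) := by
  rw [← Measure.restrict_congr_set Ioc_ae_eq_Icc]
  refine Measure.ext_of_Iic _ _ fun a => ?_
  rw [Measure.map_apply hcont.measurable measurableSet_Iic,
    Measure.restrict_apply measurableSet_Iic, inter_comm, Ioc_inter_Iic, Real.volume_Ioc,
    sub_zero]
  rcases le_or_gt a 0 with ha0 | ha0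
  · have hpre : cdf μ ⁻¹' Iic a = ∅ := eq_empty_of_forall_notMem fun x hx =>
      (ha0.trans_lt (cdf_mem_Ioo_of_strictMono hmono x).1).not_ge hx
    simp [hpre, ENNReal.ofReal_of_nonpos ha0]
  rcases le_or_gt 1 a with ha1 | ha1
  · have hpre : cdf μ ⁻¹' Iic a = univ := eq_univ_of_forall fun x =>
      ((cdf_mem_Ioo_of_strictMono hmono x).2.trans_le ha1).le
    simp [hpre, ha1]
  obtain ⟨x, rfl⟩ := Ioo_subset_range_cdf hcont ⟨ha0, ha1⟩
  have hpre : cdf μ ⁻¹' Iic (cdf μ x) = Iic x := by ext; simp [hmono.le_iff_le]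
  rw [hpre, ← ofReal_cdf, inf_eq_right.2 ha1.le]

theorem cdf_withDensity_ofReal {g : ℝ → ℝ} (hg_nonneg : ∀ᵐ x, 0 ≤ g x) (hg : Integrable g)
    [IsProbabilityMeasure (volume.withDensity fun x => ENNReal.ofReal (g x))] (x : ℝ) :
    cdf (volume.withDensity fun x => ENNReal.ofReal (g x)) x = ∫ t in Iic x, g t := by
  rw [cdf_eq_real, measureReal_def, withDensity_apply _ measurableSet_Iic,
    ← ofReal_integral_eq_lintegral_ofReal hg.integrableOn (ae_restrict_of_ae hg_nonneg),
    ENNReal.toReal_ofReal (setIntegral_nonneg_of_ae_restrict (ae_restrict_of_ae hg_nonneg))]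

theorem map_withDensity_integral_eq_restrict_Icc {β : Type*} [MeasurableSpace β] {ν : Measure β}
    [SFinite ν] {f : ℝ × β → ℝ} (hf_nonneg : ∀ p, 0 ≤ f p) (hf : Integrable f (volume.prod ν))
    (hf_one : ∫ p, f p ∂volume.prod ν = 1) {F : ℝ → ℝ}
    (hF : ∀ x, F x = ∫ t in Iic x, ∫ y, f (t, y) ∂ν) (hcont : Continuous F) (hmono : StrictMono F) :
    (volume.withDensity fun x => ENNReal.ofReal (∫ y, f (x, y) ∂ν)).map F =
      volume.restrict (Icc 0 1) := by
  have := isProbabilityMeasure_withDensity_integral hf_nonneg hf hf_one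
  obtain rfl : F = cdf _ := funext fun x => (hF x).trans (cdf_withDensity_ofReal
    (ae_of_all _ fun x => integral_nonneg fun y => hf_nonneg _) hf.integral_prod_left x).symm
  exact map_cdf_eq_restrict_Icc hcont hmono

end ProbabilityTheory

def IsCopulaDensity (c : ℝ × ℝ → ℝ) : Prop :=
  Measurable c ∧ (∀ p, 0 ≤ c p) ∧ IntegrableOn c (Icc 0 1 ×ˢ Icc 0 1) ∧
    (∀ᵐ u ∂volume.restrict (Icc 0 1), ∫ v in Icc 0 1, c (u, v) = 1) ∧
    (∀ᵐ v ∂volume.restrict (Icc 0 1), ∫ u in Icc 0 1, c (u, v) = 1)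

theorem isCopulaDensity_of_ae_lintegral_eq_one {c : ℝ × ℝ → ℝ} (hc : Measurable c)
    (hc_nonneg : ∀ p, 0 ≤ c p)
    (hu : ∀ᵐ u ∂volume.restrict (Icc 0 1), ∫⁻ v in Icc 0 1, ENNReal.ofReal (c (u, v)) = 1)
    (hv : ∀ᵐ v ∂volume.restrict (Icc 0 1), ∫⁻ u in Icc 0 1, ENNReal.ofReal (c (u, v)) = 1) :
    IsCopulaDensity c := by
  refine ⟨hc, hc_nonneg, ?_, ?_, ?_⟩
  · rw [IntegrableOn, Measure.volume_eq_prod, ← Measure.prod_restrict]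
    exact integrable_prod_of_ae_lintegral_eq_one hc hc_nonneg hu
  · exact hu.mono fun u h => integral_eq_one_of_lintegral_ofReal_eq_one
      (ae_of_all _ fun v => hc_nonneg _) (hc.comp measurable_prodMk_left).aestronglyMeasurable h
  · exact hv.mono fun v h => integral_eq_one_of_lintegral_ofReal_eq_one
      (ae_of_all _ fun u => hc_nonneg _) (hc.comp measurable_prodMk_right).aestronglyMeasurable h

noncomputable def copulaDensity (f : ℝ × ℝ → ℝ) (gX gY QX QY : ℝ → ℝ) (p : ℝ × ℝ) : ℝ :=
  f (QX p.1, QY p.2) / (gX (QX p.1) * gY (QY p.2))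

section copulaDensity

variable {f : ℝ × ℝ → ℝ} {gX gY FX FY QX QY : ℝ → ℝ}

theorem measurable_copulaDensity (hf : Measurable f) (hgX : Measurable gX) (hgY : Measurable gY)
    (hQX : Measurable QX) (hQY : Measurable QY) : Measurable (copulaDensity f gX gY QX QY) := by
  unfold copulaDensity
  fun_prop

theorem copulaDensity_nonneg (hf : ∀ p, 0 ≤ f p) (hgX : ∀ x, 0 ≤ gX x) (hgY : ∀ y, 0 ≤ gY y)
    (p : ℝ × ℝ) : 0 ≤ copulaDensity f gX gY QX QY p :=
  div_nonneg (hf _) (mul_nonneg (hgX _) (hgY _))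

theorem copulaDensity_swap (u v : ℝ) :
    copulaDensity f gX gY QX QY (u, v) = copulaDensity (fun p => f p.swap) gY gX QY QX (v, u) := by
  simp only [copulaDensity, Prod.swap_prod_mk, mul_comm]

theorem copulaDensity_apply_of_leftInverse (hQX : LeftInverse QX FX) (hQY : LeftInverse QY FY)
    (x y : ℝ) :
    copulaDensity f gX gY QX QY (FX x, FY y) = f (x, y) / (gX x * gY y) := by
  simp only [copulaDensity, hQX x, hQY y]

theorem ae_eq_mul_copulaDensity (hQX : LeftInverse QX FX) (hQY : LeftInverse QY FY)
    (hgX_pos : ∀ᵐ x, 0 < gX x) (hgY_pos : ∀ᵐ y, 0 < gY y) :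
    ∀ᵐ p : ℝ × ℝ, f p = gX p.1 * gY p.2 * copulaDensity f gX gY QX QY (FX p.1, FY p.2) := by
  rw [Measure.volume_eq_prod]
  filter_upwards [Measure.quasiMeasurePreserving_fst.ae hgX_pos,
    Measure.quasiMeasurePreserving_snd.ae hgY_pos] with p hx hy
  rw [copulaDensity_apply_of_leftInverse hQX hQY]
  field_simp

theorem ae_lintegral_copulaDensity_eq_one (hf_nonneg : ∀ p, 0 ≤ f p)
    (hf_slice : ∀ᵐ x, Integrable fun y => f (x, y))
    (hgX_pos : ∀ᵐ x, 0 < ∫ y, f (x, y)) (hgY : Measurable gY) (hgY_pos : ∀ᵐ y, 0 < gY y)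
    (hFX : MeasurableEmbedding FX) (hFY : MeasurableEmbedding FY)
    (hmapX : (volume.withDensity fun x => ENNReal.ofReal (∫ y, f (x, y))).map FX =
      volume.restrict (Icc 0 1))
    (hmapY : (volume.withDensity fun y => ENNReal.ofReal (gY y)).map FY =
      volume.restrict (Icc 0 1))
    (hQX : LeftInverse QX FX) (hQY : LeftInverse QY FY) :
    ∀ᵐ u ∂volume.restrict (Icc 0 1), ∫⁻ v in Icc 0 1,
      ENNReal.ofReal (copulaDensity f (fun x => ∫ y, f (x, y)) gY QX QY (u, v)) = 1 := by
  -- only the outer measure; the inner integral stays over `[0, 1]`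
  nth_rw 2 [← hmapX]
  rw [hFX.ae_map_iff]
  refine (withDensity_absolutelyContinuous _ _).ae_le ?_
  filter_upwards [hf_slice, hgX_pos] with x hx_int hx_pos
  rw [← hmapY, hFY.lintegral_map, lintegral_withDensity_eq_lintegral_mul_non_measurable _
    (by fun_prop) (ae_of_all _ fun _ => ENNReal.ofReal_lt_top)]
  calc ∫⁻ y, ENNReal.ofReal (gY y) *
        ENNReal.ofReal (copulaDensity f (fun x => ∫ y, f (x, y)) gY QX QY (FX x, FY y))
      = ∫⁻ y, ENNReal.ofReal (f (x, y) / ∫ y, f (x, y)) := by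
        refine lintegral_congr_ae (hgY_pos.mono fun y hy => ?_)
        dsimp only
        rw [copulaDensity_apply_of_leftInverse hQX hQY, ← ENNReal.ofReal_mul hy.le]
        field_simp
    _ = 1 := by
      rw [← ofReal_integral_eq_lintegral_ofReal (hx_int.div_const _)
        (ae_of_all _ fun y => div_nonneg (hf_nonneg _) hx_pos.le), integral_div,
        div_self hx_pos.ne', ENNReal.ofReal_one]

end copulaDensity

theorem sklar_bivariate_density_general
    (f : ℝ × ℝ → ℝ) (fX fY FX FY : ℝ → ℝ)
    (hf_meas : Measurable f) (hf_nonneg : ∀ p, 0 ≤ f p)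
    (hf_int : Integrable f) (hf_one : ∫ p, f p = 1)
    (hmargX : ∀ x, fX x = ∫ y, f (x, y))
    (hmargY : ∀ y, fY y = ∫ x, f (x, y))
    (hfX_pos : ∀ᵐ x : ℝ, 0 < fX x) (hfY_pos : ∀ᵐ y : ℝ, 0 < fY y)
    (hFX : ∀ x, FX x = ∫ t in Iic x, fX t)
    (hFY : ∀ y, FY y = ∫ t in Iic y, fY t)
    (hFX_mono : StrictMono FX) (hFY_mono : StrictMono FY)
    (hFX_cont : Continuous FX) (hFY_cont : Continuous FY) :
    ∃ c : ℝ × ℝ → ℝ, Measurable c ∧ (∀ p, 0 ≤ c p) ∧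
      IntegrableOn c (Icc (0:ℝ) 1 ×ˢ Icc (0:ℝ) 1) ∧
      (∀ᵐ u ∂(volume.restrict (Icc (0:ℝ) 1)), (∫ v in Icc (0:ℝ) 1, c (u, v)) = 1) ∧
      (∀ᵐ v ∂(volume.restrict (Icc (0:ℝ) 1)), (∫ u in Icc (0:ℝ) 1, c (u, v)) = 1) ∧
      (∀ᵐ p : ℝ × ℝ, f p = fX p.1 * fY p.2 * c (FX p.1, FY p.2)) := by
  obtain rfl : fX = fun x => ∫ y, f (x, y) := funext hmargX
  obtain rfl : fY = fun y => ∫ x, f (x, y) := funext hmargY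
  have hfX_meas : Measurable fun x => ∫ y, f (x, y) :=
    hf_meas.stronglyMeasurable.integral_prod_right'.measurable
  have hfY_meas : Measurable fun y => ∫ x, f (x, y) :=
    hf_meas.stronglyMeasurable.integral_prod_left'.measurable
  have hf_int_swap : Integrable fun p : ℝ × ℝ => f p.swap := hf_int.swap
  have hf_one_swap : ∫ p : ℝ × ℝ, f p.swap = 1 := (integral_prod_swap f).trans hf_one
  have hX := hFX_cont.measurableEmbedding hFX_mono.injective
  have hY := hFY_cont.measurableEmbedding hFY_mono.injective
  have hmapX :=
    map_withDensity_integral_eq_restrict_Icc hf_nonneg hf_int hf_one hFX hFX_cont hFX_mono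
  have hmapY := map_withDensity_integral_eq_restrict_Icc (f := fun p => f p.swap)
    (fun p => hf_nonneg _) hf_int_swap hf_one_swap hFY hFY_cont hFY_mono
  set c := copulaDensity f _ _ hX.invFun hY.invFun
  have hu := ae_lintegral_copulaDensity_eq_one hf_nonneg hf_int.prod_right_ae hfX_pos hfY_meas
    hfY_pos hX hY hmapX hmapY hX.leftInverse_invFun hY.leftInverse_invFun
  have hv : ∀ᵐ v ∂volume.restrict (Icc 0 1), ∫⁻ u in Icc 0 1, ENNReal.ofReal (c (u, v)) = 1 := by
    simp only [c, copulaDensity_swap (f := f)]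
    exact ae_lintegral_copulaDensity_eq_one (f := fun p => f p.swap) (fun p => hf_nonneg _)
      hf_int_swap.prod_right_ae hfY_pos hfX_meas hfX_pos hY hX hmapY hmapX
      hY.leftInverse_invFun hX.leftInverse_invFun
  obtain ⟨hc_meas, hc_nonneg, hc_int, hc_u, hc_v⟩ := isCopulaDensity_of_ae_lintegral_eq_one
    (measurable_copulaDensity hf_meas hfX_meas hfY_meas hX.measurable_invFun hY.measurable_invFun)
    (copulaDensity_nonneg hf_nonneg (fun x => integral_nonneg fun y => hf_nonneg _)
      (fun y => integral_nonneg fun x => hf_nonneg _)) hu hv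
  exact ⟨c, hc_meas, hc_nonneg, hc_int, hc_u, hc_v,
    ae_eq_mul_copulaDensity hX.leftInverse_invFun hY.leftInverse_invFun hfX_pos hfY_pos⟩

/-- Sklar's theorem (bivariate, absolutely continuous case): there exists a copula
density `c` on `[0,1]²` with uniform marginals such that
`f(x,y) = f_X(x) f_Y(y) c(F_X(x), F_Y(y))` almost everywhere. -/
theorem sklar_bivariate_density
    (f : ℝ × ℝ → ℝ) (fX fY FX FY : ℝ → ℝ)
    (hf_meas : Measurable f) (hf_nonneg : ∀ p, 0 ≤ f p)
    (hf_int : Integrable f) (hf_one : ∫ p, f p = 1)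
    (hmargX : ∀ x, fX x = ∫ y, f (x, y))
    (hmargY : ∀ y, fY y = ∫ x, f (x, y))
    (hfX_pos : ∀ᵐ x : ℝ, 0 < fX x) (hfY_pos : ∀ᵐ y : ℝ, 0 < fY y)
    (hFX : ∀ x, FX x = ∫ t in Iic x, fX t)
    (hFY : ∀ y, FY y = ∫ t in Iic y, fY t)
    (hFX_mono : StrictMono FX) (hFY_mono : StrictMono FY)
    (hFX_cont : Continuous FX) (hFY_cont : Continuous FY)
    (hFX_range : ∀ x, FX x ∈ Ioo (0:ℝ) 1) (hFY_range : ∀ y, FY y ∈ Ioo (0:ℝ) 1) :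
    ∃ c : ℝ × ℝ → ℝ, Measurable c ∧ (∀ p, 0 ≤ c p) ∧
      IntegrableOn c (Icc (0:ℝ) 1 ×ˢ Icc (0:ℝ) 1) ∧
      (∀ᵐ u ∂(volume.restrict (Icc (0:ℝ) 1)), (∫ v in Icc (0:ℝ) 1, c (u, v)) = 1) ∧
      (∀ᵐ v ∂(volume.restrict (Icc (0:ℝ) 1)), (∫ u in Icc (0:ℝ) 1, c (u, v)) = 1) ∧
      (∀ᵐ p : ℝ × ℝ, f p = fX p.1 * fY p.2 * c (FX p.1, FY p.2)) :=
  sklar_bivariate_density_general f fX fY FX FY hf_meas hf_nonneg hf_int hf_one hmargX hmargY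
    hfX_pos hfY_pos hFX hFY hFX_mono hFY_mono hFX_cont hFY_cont
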